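/- Posterior consistency for i.i.d. sampling from a finite observation space with a continuous, identifiable likelihood (the Bayesian consistency engine behind Theorems 1 and 2). Let Θ be a compact metric space, X a nonempty finite type, and L : Θ → X → ℝ a function such that L θ x ≥ 0 for all θ ∈ Θ and x ∈ X, Σ_{x ∈ X} L θ x = 1 for all θ, the map θ ↦ L θ x is continuous for each x, and L is injective (L θ = L θ' implies θ = θ'). Fix θ₀ ∈ Θ, let μ₀ be the probability measure on X with μ₀({x}) = L θ₀ x, and let Π be a Borel probability measure on Θ whose topological support is all of Θ. For data x₁, …, x_n ∈ X define the posterior of a Borel set A ⊆ Θ by Π_n(A | x₁, …, x_n) = (∫_A ∏_{i=1}^n L θ x_i dΠ(θ)) / (∫_Θ ∏_{i=1}^n L θ x_i dΠ(θ)), whenever the denominator is strictly positive. Then for μ₀^{⊗ℕ}-almost every sequence (x_i)_{i∈ℕ} in X^ℕ, for every ε > 0, the posterior mass Π_n({θ ∈ Θ : dist(θ, θ₀) < ε} | x₁, …, x_n) is well-defined for all sufficiently large n and converges to 1 as n → ∞. -/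

import Mathlib

open MeasureTheory ProbabilityTheory Filter
open scoped ENNReal Topology

/-
The likelihood of `θ` after `n` observations is `(∏ₓ L θ x ^ (Nₙ x / n)) ^ n`, where `Nₙ x` counts
the observations equal to `x`. By the strong law of large numbers the exponents converge to
`L θ₀ x` almost surely, so the `n`-th root of the likelihood converges uniformly on the compact
space `Θ` to `G θ = ∏ₓ L θ x ^ L θ₀ x`. By Gibbs' inequality and identifiability `G` has a strict
maximum at `θ₀`, so for some `r < s` the likelihood is eventually at most `rⁿ` off the `ε`-ball and
at least `sⁿ` on a neighbourhood of `θ₀`, which has positive prior mass. The posterior mass off the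
ball is then `O((r / s) ^ n)`.
-/

open Finset

open Classical in
noncomputable def empiricalFreq {X : Type*} (ω : ℕ → X) (n : ℕ) (x : X) : ℝ :=
  #{i ∈ range n | ω i = x} / n

section Gibbs

variable {X : Type*} [Fintype X]

theorem prod_rpow_lt_prod_rpow_self {p q : X → ℝ} (hp : ∀ x, 0 ≤ p x) (hq : ∀ x, 0 ≤ q x)
    (hp1 : ∑ x, p x = 1) (hq1 : ∑ x, q x = 1) (hqp : q ≠ p) :
    ∏ x with 0 < p x, q x ^ p x < ∏ x with 0 < p x, p x ^ p x := by
  classical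
  set S : Finset X := {x | 0 < p x}
  have hpS : ∑ x ∈ S, p x = 1 :=
    (sum_filter_of_ne fun x _ hx => (hp x).lt_of_ne' hx).trans hp1
  have hqS : ∑ x ∈ S, q x ≤ 1 := hq1 ▸ sum_le_univ_sum_of_nonneg hq
  have hpos : 0 < ∏ x ∈ S, p x ^ p x :=
    prod_pos fun x hx => Real.rpow_pos_of_pos (mem_filter.1 hx).2 _
  have hsplit : ∏ x ∈ S, q x ^ p x = (∏ x ∈ S, (q x / p x) ^ p x) * ∏ x ∈ S, p x ^ p x := by
    rw [← prod_mul_distrib]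
    refine prod_congr rfl fun x hx => ?_
    rw [Real.div_rpow (hq x) (hp x),
      div_mul_cancel₀ _ (Real.rpow_pos_of_pos (mem_filter.1 hx).2 _).ne']
  have hmean : ∑ x ∈ S, p x * (q x / p x) = ∑ x ∈ S, q x :=
    sum_congr rfl fun x hx => mul_div_cancel₀ _ (mem_filter.1 hx).2.ne'
  -- AM-GM with weights `p` applied to `q / p`; equality in it forces `q = p` on the support.
  have hamgm := Real.geom_mean_le_arith_mean_weighted S p (fun x => q x / p x)
    (fun x _ => hp x) hpS fun x _ => div_nonneg (hq x) (hp x)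
  rw [hmean] at hamgm
  rw [hsplit]
  refine mul_lt_of_lt_one_left hpos (lt_of_le_of_ne (hamgm.trans hqS) fun heq => hqp ?_)
  have hqS1 : ∑ x ∈ S, q x = 1 := le_antisymm hqS (heq ▸ hamgm)
  have hratio := (Real.geom_mean_eq_arith_mean_weighted_iff_of_pos' S p (fun x => q x / p x)
    (fun x hx => (mem_filter.1 hx).2) hpS fun x _ => div_nonneg (hq x) (hp x)).1
    (by rw [hmean, heq, hqS1])
  have hq0 : ∀ x ∉ S, q x = 0 := by
    have : ∑ x ∈ univ \ S, q x = 0 := by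
      rw [sum_sdiff_eq_sub (subset_univ S), hq1, hqS1, sub_self]
    exact fun x hx => (sum_eq_zero_iff_of_nonneg fun y _ => hq y).1 this x (by simpa using hx)
  funext x
  by_cases hx : x ∈ S
  · have := hratio x hx
    rwa [hmean, hqS1, div_eq_one_iff_eq (mem_filter.1 hx).2.ne'] at this
  · rw [hq0 x hx]
    simp only [S, mem_filter, mem_univ, true_and, not_lt] at hx
    exact (le_antisymm hx (hp x)).symm

end Gibbs

section Counting

variable {X : Type*}

theorem prod_range_comp_eq_prod_pow_card {M : Type*} [CommMonoid M] [DecidableEq X] (ω : ℕ → X)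
    (f : X → M) {S : Finset X} {n : ℕ} (hω : ∀ i < n, ω i ∈ S) :
    ∏ i ∈ range n, f (ω i) = ∏ x ∈ S, f x ^ #{i ∈ range n | ω i = x} := by
  rw [← prod_fiberwise_of_maps_to' (fun i hi => hω i (mem_range.1 hi))]
  exact prod_congr rfl fun x _ => prod_const _

theorem prod_ofReal_eq_ofReal_prod_rpow_empiricalFreq_pow (ω : ℕ → X) {q : X → ℝ}
    (hq : ∀ x, 0 ≤ q x) {S : Finset X} {n : ℕ} (hn : n ≠ 0) (hω : ∀ i, ω i ∈ S) :
    ∏ i : Fin n, ENNReal.ofReal (q (ω i))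
      = ENNReal.ofReal (∏ x ∈ S, q x ^ empiricalFreq ω n x) ^ n := by
  classical
  rw [Fin.prod_univ_eq_prod_range (fun i => ENNReal.ofReal (q (ω i))),
    ← ENNReal.ofReal_prod_of_nonneg fun i _ => hq (ω i),
    ← ENNReal.ofReal_pow (prod_nonneg fun x _ => Real.rpow_nonneg (hq x) _),
    prod_range_comp_eq_prod_pow_card ω q fun i _ => hω i, ← prod_pow]
  refine congrArg ENNReal.ofReal (prod_congr rfl fun x _ => ?_)
  rw [← Real.rpow_natCast _ n, ← Real.rpow_mul (hq x), empiricalFreq,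
    div_mul_cancel₀ _ (Nat.cast_ne_zero.2 hn), Real.rpow_natCast]

end Counting

section Uniform

variable {Θ X : Type*} [UniformSpace Θ] [CompactSpace Θ] [Finite X]

theorem tendstoUniformly_prod_rpow {q : Θ → X → ℝ} (hq : ∀ x, Continuous (q · x)) {S : Finset X}
    {a : ℕ → X → ℝ} {a₀ : X → ℝ} (ha₀ : ∀ x ∈ S, 0 < a₀ x)
    (ha : ∀ x, Tendsto (a · x) atTop (𝓝 (a₀ x))) :
    TendstoUniformly (fun n θ => ∏ x ∈ S, q θ x ^ a n x) (fun θ => ∏ x ∈ S, q θ x ^ a₀ x)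
      atTop := by
  let U : Set (X → ℝ) := ⋂ x ∈ S, {b | 0 < b x}
  have hU : U ∈ 𝓝 a₀ :=
    (isOpen_biInter_finset fun x _ => isOpen_lt continuous_const (continuous_apply x)).mem_nhds
      (Set.mem_iInter₂.2 ha₀)
  have hcont : ContinuousOn (fun z : (X → ℝ) × Θ => ∏ x ∈ S, q z.2 x ^ z.1 x) (U ×ˢ Set.univ) :=
    continuousOn_finsetProd S fun x hx =>
      ((hq x).comp continuous_snd).continuousOn.rpow
        ((continuous_apply x).comp continuous_fst).continuousOn fun z hz =>
          Or.inr (Set.mem_iInter₂.1 hz.1 x hx)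
  have hunif : TendstoUniformly (fun (b : X → ℝ) (θ : Θ) => ∏ x ∈ S, q θ x ^ b x)
      (fun θ => ∏ x ∈ S, q θ x ^ a₀ x) (𝓝 a₀) :=
    ContinuousOn.tendstoUniformly hU hcont
  exact fun u hu => (tendsto_pi_nhds.2 ha).eventually (hunif u hu)

end Uniform

section Concentration

variable {Θ : Type*} [MeasurableSpace Θ] {μ : Measure Θ} {f : ℕ → Θ → ℝ≥0∞} {B V : Set Θ}
  {r s : ℝ≥0∞}

theorem mul_measure_le_lintegral {g : Θ → ℝ≥0∞} (hg : Measurable g) {c : ℝ≥0∞}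
    (h : ∀ θ ∈ V, c ≤ g θ) : c * μ V ≤ ∫⁻ θ, g θ ∂μ :=
  calc c * μ V = ∫⁻ _ in V, c ∂μ := (setLIntegral_const _ _).symm
    _ ≤ ∫⁻ θ in V, g θ ∂μ := setLIntegral_mono hg h
    _ ≤ ∫⁻ θ, g θ ∂μ := setLIntegral_le_lintegral _ _

theorem tendsto_setLIntegral_compl_div_lintegral_zero [IsFiniteMeasure μ]
    (hf : ∀ n, Measurable (f n)) (hV : μ V ≠ 0) (hrs : r < s)
    (hout : ∀ᶠ n in atTop, ∀ θ ∉ B, f n θ ≤ r ^ n)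
    (hin : ∀ᶠ n in atTop, ∀ θ ∈ V, s ^ n ≤ f n θ) :
    Tendsto (fun n => (∫⁻ θ in Bᶜ, f n θ ∂μ) / ∫⁻ θ, f n θ ∂μ) atTop (𝓝 0) := by
  have hbound : ∀ᶠ n in atTop, (∫⁻ θ in Bᶜ, f n θ ∂μ) / ∫⁻ θ, f n θ ∂μ
      ≤ (r / s) ^ n * (μ Set.univ / μ V) := by
    filter_upwards [hout, hin] with n hout hin
    have hnum : ∫⁻ θ in Bᶜ, f n θ ∂μ ≤ r ^ n * μ Set.univ :=
      calc ∫⁻ θ in Bᶜ, f n θ ∂μ ≤ ∫⁻ _ in Bᶜ, r ^ n ∂μ := setLIntegral_mono measurable_const hout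
        _ = r ^ n * μ Bᶜ := setLIntegral_const _ _
        _ ≤ r ^ n * μ Set.univ := by gcongr; exact Set.subset_univ _
    calc (∫⁻ θ in Bᶜ, f n θ ∂μ) / ∫⁻ θ, f n θ ∂μ ≤ (r ^ n * μ Set.univ) / (s ^ n * μ V) :=
          ENNReal.div_le_div hnum (mul_measure_le_lintegral (hf n) hin)
      _ = (r / s) ^ n * (μ Set.univ / μ V) := by
          rw [ENNReal.mul_div_mul_comm (Or.inr (measure_ne_top μ V)) (Or.inr hV),
            div_eq_mul_inv r s, mul_pow, ← ENNReal.inv_pow, div_eq_mul_inv (r ^ n)]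
  have hlim : Tendsto (fun n : ℕ => (r / s) ^ n * (μ Set.univ / μ V)) atTop (𝓝 0) := by
    have hrs' : r / s < 1 :=
      (ENNReal.div_lt_iff (Or.inl (zero_le.trans_lt hrs).ne') (Or.inr hrs.ne_top)).2
        (by rwa [one_mul])
    simpa using ENNReal.Tendsto.mul_const (ENNReal.tendsto_pow_atTop_nhds_zero_of_lt_one hrs')
      (Or.inr (ENNReal.div_ne_top (measure_ne_top μ _) hV))
  exact tendsto_of_tendsto_of_tendsto_of_le_of_le' tendsto_const_nhds hlim
    (Eventually.of_forall fun _ => zero_le) hbound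

theorem posterior_tendsto_one_of_exponential_gap [IsFiniteMeasure μ]
    (hf : ∀ n, Measurable (f n)) (hfin : ∀ n, ∫⁻ θ, f n θ ∂μ ≠ ∞) (hB : MeasurableSet B)
    (hV : μ V ≠ 0) (hrs : r < s)
    (hout : ∀ᶠ n in atTop, ∀ θ ∉ B, f n θ ≤ r ^ n)
    (hin : ∀ᶠ n in atTop, ∀ θ ∈ V, s ^ n ≤ f n θ) :
    (∀ᶠ n in atTop, 0 < ∫⁻ θ, f n θ ∂μ ∧ ∫⁻ θ, f n θ ∂μ < ∞) ∧
      Tendsto (fun n => (∫⁻ θ in B, f n θ ∂μ) / ∫⁻ θ, f n θ ∂μ) atTop (𝓝 1) := by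
  have hpos : ∀ᶠ n in atTop, 0 < ∫⁻ θ, f n θ ∂μ := hin.mono fun n hn =>
    (ENNReal.mul_pos (pow_ne_zero _ (zero_le.trans_lt hrs).ne') hV).trans_le
      (mul_measure_le_lintegral (hf n) hn)
  refine ⟨hpos.mono fun n hn => ⟨hn, (hfin n).lt_top⟩, ?_⟩
  have hsplit : ∀ᶠ n in atTop, (∫⁻ θ in B, f n θ ∂μ) / ∫⁻ θ, f n θ ∂μ
      = 1 - (∫⁻ θ in Bᶜ, f n θ ∂μ) / ∫⁻ θ, f n θ ∂μ := hpos.mono fun n hn => by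
    have hsum : (∫⁻ θ in B, f n θ ∂μ) / ∫⁻ θ, f n θ ∂μ
        + (∫⁻ θ in Bᶜ, f n θ ∂μ) / ∫⁻ θ, f n θ ∂μ = 1 := by
      rw [ENNReal.div_add_div_same, lintegral_add_compl _ hB, ENNReal.div_self hn.ne' (hfin n)]
    exact ENNReal.eq_sub_of_add_eq (ne_top_of_le_ne_top ENNReal.one_ne_top (hsum ▸ le_add_self))
      hsum
  have hlim := ((ENNReal.continuous_sub_left ENNReal.one_ne_top).tendsto 0).comp
    (tendsto_setLIntegral_compl_div_lintegral_zero hf hV hrs hout hin)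
  rw [tsub_zero] at hlim
  exact hlim.congr' (hsplit.mono fun n hn => hn.symm)

end Concentration

section Gap

variable {Θ : Type*}

theorem TendstoUniformly.eventually_le_and_le {ι : Type*} {l : Filter ι} {F : ι → Θ → ℝ}
    {G : Θ → ℝ} (hF : TendstoUniformly F G l) {C V : Set Θ} {b r s a : ℝ} (hbr : b < r)
    (hsa : s < a) (hC : ∀ θ ∈ C, G θ ≤ b) (hV : ∀ θ ∈ V, a ≤ G θ) :
    ∀ᶠ n in l, (∀ θ ∈ C, F n θ ≤ r) ∧ ∀ θ ∈ V, s ≤ F n θ := by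
  filter_upwards [Metric.tendstoUniformly_iff.1 hF _ (lt_min (sub_pos.2 hbr) (sub_pos.2 hsa))]
    with n hn
  refine ⟨fun θ hθ => ?_, fun θ hθ => ?_⟩
  · linarith [(abs_sub_lt_iff.1 (Real.dist_eq _ _ ▸ hn θ)).2, min_le_left (r - b) (a - s),
      hC θ hθ]
  · linarith [(abs_sub_lt_iff.1 (Real.dist_eq _ _ ▸ hn θ)).1, min_le_right (r - b) (a - s),
      hV θ hθ]

variable [TopologicalSpace Θ]

theorem IsCompact.exists_forall_le_of_forall_lt {C : Set Θ} (hC : IsCompact C) {G : Θ → ℝ}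
    (hG : ContinuousOn G C) {a c : ℝ} (hca : c < a) (hlt : ∀ θ ∈ C, G θ < a) :
    ∃ b, c ≤ b ∧ b < a ∧ ∀ θ ∈ C, G θ ≤ b := by
  rcases C.eq_empty_or_nonempty with rfl | hne
  · exact ⟨c, le_rfl, hca, by simp⟩
  obtain ⟨θ₁, hθ₁, hmax⟩ := hC.exists_isMaxOn hne hG
  exact ⟨max c (G θ₁), le_max_left _ _, max_lt hca (hlt θ₁ hθ₁),
    fun θ hθ => (hmax hθ).trans (le_max_right _ _)⟩
end Gap

section IID

variable {X : Type*} [MeasurableSpace X]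

theorem eq_infinitePi_of_cylinder {P : Measure (ℕ → X)} {μ₀ : Measure X} [IsProbabilityMeasure μ₀]
    (hP : ∀ (n : ℕ) (s : Fin n → Set X), (∀ i, MeasurableSet (s i)) →
      P {ω | ∀ i : Fin n, ω (i : ℕ) ∈ s i} = ∏ i, μ₀ (s i)) :
    P = Measure.infinitePi fun _ => μ₀ := by
  classical
  refine Measure.eq_infinitePi _ fun I t ht => ?_
  obtain ⟨n, hIn⟩ := I.exists_nat_subset_range
  have hcyl : Set.pi I t = {ω | ∀ k : Fin n, ω k ∈ if (k : ℕ) ∈ I then t k else Set.univ} := by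
    ext ω
    simp only [Set.mem_pi, Finset.mem_coe, Set.mem_ofPred_eq]
    refine ⟨fun h k => ?_, fun h i hi => ?_⟩
    · split_ifs with hk
      · exact h k hk
      · trivial
    · simpa [hi] using h ⟨i, mem_range.1 (hIn hi)⟩
  rw [hcyl, hP n _ fun k => by split_ifs; exacts [ht k, .univ],
    Fin.prod_univ_eq_prod_range (fun k => μ₀ (if k ∈ I then t k else Set.univ))]
  simp only [apply_ite μ₀, measure_univ]
  rw [prod_ite_mem, inter_eq_right.2 hIn]

variable [Countable X] (μ : Measure X) [IsProbabilityMeasure μ]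

theorem ae_measure_singleton_ne_zero_infinitePi :
    ∀ᵐ ω ∂(Measure.infinitePi fun _ : ℕ => μ), ∀ i, μ {ω i} ≠ 0 :=
  ae_all_iff.2 fun i =>
    (measurePreserving_eval_infinitePi (fun _ => μ) i).quasiMeasurePreserving.ae
      (p := fun x : X => μ {x} ≠ 0) (ae_iff_of_countable.2 fun _ hx => hx)

variable [MeasurableSingletonClass X]

theorem ae_tendsto_empiricalFreq_infinitePi :
    ∀ᵐ ω ∂(Measure.infinitePi fun _ : ℕ => μ), ∀ x,
      Tendsto (fun n => empiricalFreq ω n x) atTop (𝓝 (μ.real {x})) := by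
  classical
  refine ae_all_iff.2 fun x => ?_
  let φ : X → ℝ := ({x} : Set X).indicator 1
  have hφ : Measurable φ := measurable_one.indicator (measurableSet_singleton x)
  let Y : ℕ → (ℕ → X) → ℝ := fun i ω => φ (ω i)
  have hindep := iIndepFun_infinitePi (P := fun _ : ℕ => μ) (X := fun _ => φ) fun _ => hφ
  have hlaw : ∀ i, (Measure.infinitePi fun _ => μ).map (Y i) = μ.map φ := fun i =>
    (Measure.map_map hφ (measurable_pi_apply i)).symm.trans
      (congrArg (Measure.map φ) (Measure.infinitePi_map_eval _ i))
  have hident : ∀ i, IdentDistrib (Y i) (Y 0) (Measure.infinitePi fun _ => μ)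
      (Measure.infinitePi fun _ => μ) := fun i =>
    ⟨(hφ.comp (measurable_pi_apply i)).aemeasurable,
      (hφ.comp (measurable_pi_apply 0)).aemeasurable, by rw [hlaw, hlaw]⟩
  have hmean : (Measure.infinitePi fun _ => μ)[Y 0] = μ.real {x} := by
    rw [← integral_map (φ := fun ω : ℕ → X => ω 0)
      (measurable_pi_apply 0).aemeasurable hφ.aestronglyMeasurable,
      Measure.infinitePi_map_eval, integral_indicator_one (measurableSet_singleton x)]
  have hsum : ∀ (ω : ℕ → X) (n : ℕ),
      (n : ℝ)⁻¹ • ∑ i ∈ range n, Y i ω = empiricalFreq ω n x := by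
    intro ω n
    simp only [Y, φ, Set.indicator_apply, Set.mem_singleton_iff, Pi.one_apply, sum_boole,
      empiricalFreq, smul_eq_mul, inv_mul_eq_div]
  have hint : Integrable (Y 0) (Measure.infinitePi fun _ => μ) :=
    ((integrable_const (1 : ℝ)).indicator (measurableSet_singleton x)).comp_measurable
      (measurable_pi_apply 0)
  filter_upwards [strong_law_ae Y hint (fun i j hij => hindep.indepFun hij) hident] with ω hω
  simpa only [hsum, hmean] using hω

end IID

section Consistency

variable {Θ X : Type*} [MetricSpace Θ] [CompactSpace Θ] [MeasurableSpace Θ]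
  [OpensMeasurableSpace Θ] [Fintype X]

theorem posterior_concentrates_of_tendsto_empiricalFreq (L : Θ → X → ℝ)
    (hL_nonneg : ∀ θ x, 0 ≤ L θ x) (hL_sum : ∀ θ, ∑ x, L θ x = 1)
    (hL_cont : ∀ x, Continuous fun θ => L θ x) (hL_inj : Function.Injective L) (θ₀ : Θ)
    (prior : Measure Θ) [IsFiniteMeasure prior]
    (hprior_supp : ∀ U : Set Θ, IsOpen U → U.Nonempty → 0 < prior U) (ω : ℕ → X)
    (hω : ∀ i, 0 < L θ₀ (ω i))
    (hfreq : ∀ x, Tendsto (fun n => empiricalFreq ω n x) atTop (𝓝 (L θ₀ x))) {ε : ℝ}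
    (hε : 0 < ε) :
    (∀ᶠ n in atTop,
        0 < ∫⁻ θ, ∏ i : Fin n, ENNReal.ofReal (L θ (ω (i : ℕ))) ∂prior ∧
          ∫⁻ θ, ∏ i : Fin n, ENNReal.ofReal (L θ (ω (i : ℕ))) ∂prior < ⊤) ∧
      Tendsto
        (fun n : ℕ =>
          (∫⁻ θ in {θ : Θ | dist θ θ₀ < ε},
              ∏ i : Fin n, ENNReal.ofReal (L θ (ω (i : ℕ))) ∂prior) /
            ∫⁻ θ, ∏ i : Fin n, ENNReal.ofReal (L θ (ω (i : ℕ))) ∂prior)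
        atTop (𝓝 1) := by
  classical
  -- `(a, θ) ↦ L θ x ^ a` is discontinuous where both vanish, so only the support of `L θ₀`,
  -- which contains every observation, may enter the `n`-th root of the likelihood.
  set S : Finset X := {x | 0 < L θ₀ x}
  set F : ℕ → Θ → ℝ := fun n θ => ∏ x ∈ S, L θ x ^ empiricalFreq ω n x
  set G : Θ → ℝ := fun θ => ∏ x ∈ S, L θ x ^ L θ₀ x
  have hunif : TendstoUniformly F G atTop :=
    tendstoUniformly_prod_rpow hL_cont (fun x hx => (mem_filter.1 hx).2) hfreq
  have hG : Continuous G :=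
    continuous_finsetProd S fun x hx => (hL_cont x).rpow_const fun _ => Or.inr (hL_nonneg θ₀ x)
  have hG₀ : 0 < G θ₀ := prod_pos fun x hx => Real.rpow_pos_of_pos (mem_filter.1 hx).2 _
  have hC : IsCompact (Metric.ball θ₀ ε)ᶜ := Metric.isOpen_ball.isClosed_compl.isCompact
  obtain ⟨b, hb, hbG, hCb⟩ := hC.exists_forall_le_of_forall_lt hG.continuousOn hG₀
    fun θ hθ => prod_rpow_lt_prod_rpow_self (hL_nonneg θ₀) (hL_nonneg θ) (hL_sum θ₀) (hL_sum θ)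
      (hL_inj.ne fun h => hθ (h ▸ Metric.mem_ball_self hε))
  obtain ⟨t, hbt, htG⟩ := exists_between hbG
  obtain ⟨s, hbs, hst⟩ := exists_between hbt
  obtain ⟨r, hbr, hrs⟩ := exists_between hbs
  have hV : prior {θ | t < G θ} ≠ 0 :=
    (hprior_supp _ (isOpen_lt continuous_const hG) ⟨θ₀, htG⟩).ne'
  have hlik : ∀ n ≠ 0, ∀ θ,
      ∏ i : Fin n, ENNReal.ofReal (L θ (ω i)) = ENNReal.ofReal (F n θ) ^ n := fun n hn θ =>
    prod_ofReal_eq_ofReal_prod_rpow_empiricalFreq_pow ω (hL_nonneg θ) hn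
      fun i => mem_filter.2 ⟨mem_univ (ω i), hω i⟩
  have hsep := (hunif.eventually_le_and_le hbr hst hCb fun θ hθ => le_of_lt hθ).and
    (eventually_ne_atTop 0)
  refine posterior_tendsto_one_of_exponential_gap (r := ENNReal.ofReal r)
    (s := ENNReal.ofReal s) (fun n => ?_) (fun n => ?_) Metric.isOpen_ball.measurableSet hV
    ((ENNReal.ofReal_lt_ofReal_iff ((hb.trans_lt hbr).trans hrs)).2 hrs)
    (hsep.mono fun n hn θ hθ => ?_) (hsep.mono fun n hn θ hθ => ?_)
  · exact Finset.measurable_prod _ fun i _ => (hL_cont _).measurable.ennreal_ofReal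
  · refine ne_top_of_le_ne_top (measure_ne_top prior Set.univ)
      ((lintegral_mono fun θ => prod_le_one' fun i _ => ENNReal.ofReal_le_one.2 ?_).trans_eq
        lintegral_one)
    exact (single_le_sum (fun y _ => hL_nonneg θ y) (mem_univ _)).trans_eq (hL_sum θ)
  · rw [hlik n hn.2]
    gcongr
    exact hn.1.1 θ hθ
  · rw [hlik n hn.2]
    gcongr
    exact hn.1.2 θ hθ

end Consistency

theorem posterior_consistency_finite_obs_general
    {Θ : Type*} [MetricSpace Θ] [CompactSpace Θ] [MeasurableSpace Θ] [BorelSpace Θ]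
    {X : Type*} [Fintype X] [MeasurableSpace X] [MeasurableSingletonClass X]
    (L : Θ → X → ℝ)
    (hL_nonneg : ∀ θ x, 0 ≤ L θ x)
    (hL_sum : ∀ θ, ∑ x, L θ x = 1)
    (hL_cont : ∀ x, Continuous fun θ => L θ x)
    (hL_inj : Function.Injective L)
    (θ₀ : Θ)
    (μ₀ : Measure X) [IsProbabilityMeasure μ₀]
    (hμ₀ : ∀ x, μ₀ {x} = ENNReal.ofReal (L θ₀ x))
    (prior : Measure Θ) [IsProbabilityMeasure prior]
    (hprior_supp : ∀ U : Set Θ, IsOpen U → U.Nonempty → 0 < prior U)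
    (P : Measure (ℕ → X))
    (hP : ∀ (n : ℕ) (s : Fin n → Set X), (∀ i, MeasurableSet (s i)) →
      P {ω | ∀ i : Fin n, ω (i : ℕ) ∈ s i} = ∏ i, μ₀ (s i)) :
    ∀ᵐ ω ∂P, ∀ ε > (0 : ℝ),
      (∀ᶠ n in atTop,
        0 < ∫⁻ θ, ∏ i : Fin n, ENNReal.ofReal (L θ (ω (i : ℕ))) ∂prior ∧
          ∫⁻ θ, ∏ i : Fin n, ENNReal.ofReal (L θ (ω (i : ℕ))) ∂prior < ⊤) ∧
      Tendsto
        (fun n : ℕ =>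
          (∫⁻ θ in {θ : Θ | dist θ θ₀ < ε},
              ∏ i : Fin n, ENNReal.ofReal (L θ (ω (i : ℕ))) ∂prior) /
            ∫⁻ θ, ∏ i : Fin n, ENNReal.ofReal (L θ (ω (i : ℕ))) ∂prior)
        atTop (𝓝 1) := by
  obtain rfl := eq_infinitePi_of_cylinder hP
  filter_upwards [ae_measure_singleton_ne_zero_infinitePi μ₀,
    ae_tendsto_empiricalFreq_infinitePi μ₀] with ω hpos hfreq ε hε
  refine posterior_concentrates_of_tendsto_empiricalFreq L hL_nonneg hL_sum hL_cont hL_inj θ₀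
    prior hprior_supp ω (fun i => ?_) (fun x => ?_) hε
  · simpa [hμ₀] using hpos i
  · simpa [measureReal_def, hμ₀, ENNReal.toReal_ofReal (hL_nonneg θ₀ x)] using hfreq x

/-- **Posterior consistency for i.i.d. sampling from a finite observation space with a
continuous, identifiable likelihood.** Let `Θ` be a compact metric space, `X` a nonempty
finite type, and `L : Θ → X → ℝ` nonnegative with `∑_x L θ x = 1`, continuous in `θ` for each
`x`, and injective in `θ`. Let `μ₀` be the probability measure on `X` with `μ₀ {x} = L θ₀ x`,
let `Π` be a Borel prior on `Θ` with full topological support, and let `P` be the law of an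
i.i.d. sequence from `μ₀` (characterized by its values on measurable cylinder sets). Then for
`P`-almost every data sequence `ω` and every `ε > 0`, the posterior mass of the `ε`-ball
around `θ₀` is well-defined for all sufficiently large `n` and converges to `1`. -/
theorem posterior_consistency_finite_obs
    {Θ : Type*} [MetricSpace Θ] [CompactSpace Θ] [MeasurableSpace Θ] [BorelSpace Θ]
    {X : Type*} [Fintype X] [Nonempty X] [MeasurableSpace X] [MeasurableSingletonClass X]
    (L : Θ → X → ℝ)
    (hL_nonneg : ∀ θ x, 0 ≤ L θ x)
    (hL_sum : ∀ θ, ∑ x, L θ x = 1)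
    (hL_cont : ∀ x, Continuous fun θ => L θ x)
    (hL_inj : Function.Injective L)
    (θ₀ : Θ)
    (μ₀ : Measure X) [IsProbabilityMeasure μ₀]
    (hμ₀ : ∀ x, μ₀ {x} = ENNReal.ofReal (L θ₀ x))
    (prior : Measure Θ) [IsProbabilityMeasure prior]
    (hprior_supp : ∀ U : Set Θ, IsOpen U → U.Nonempty → 0 < prior U)
    (P : Measure (ℕ → X)) [IsProbabilityMeasure P]
    (hP : ∀ (n : ℕ) (s : Fin n → Set X), (∀ i, MeasurableSet (s i)) →
      P {ω | ∀ i : Fin n, ω (i : ℕ) ∈ s i} = ∏ i, μ₀ (s i)) :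
    ∀ᵐ ω ∂P, ∀ ε > (0 : ℝ),
      (∀ᶠ n in atTop,
        0 < ∫⁻ θ, ∏ i : Fin n, ENNReal.ofReal (L θ (ω (i : ℕ))) ∂prior ∧
          ∫⁻ θ, ∏ i : Fin n, ENNReal.ofReal (L θ (ω (i : ℕ))) ∂prior < ⊤) ∧
      Tendsto
        (fun n : ℕ =>
          (∫⁻ θ in {θ : Θ | dist θ θ₀ < ε},
              ∏ i : Fin n, ENNReal.ofReal (L θ (ω (i : ℕ))) ∂prior) /
            ∫⁻ θ, ∏ i : Fin n, ENNReal.ofReal (L θ (ω (i : ℕ))) ∂prior)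
        atTop (𝓝 1) :=
  posterior_consistency_finite_obs_general L hL_nonneg hL_sum hL_cont hL_inj θ₀ μ₀ hμ₀ prior
    hprior_supp P hP
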